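/- For every ε ∈ (0,1/2) there exists α > 0 such that for every p = p(d) with 1/2 − ε ≤ p(d) ≤ 1 − ε, with probability tending to 1 as d → ∞, the number of vertices of Q^d_p whose degree in the induced subgraph Q^d_p is at least (1−α)d is at most 2^{(1−α³)d}. -/

import Mathlib

open MeasureTheory

noncomputable section

abbrev Vtx (d : ℕ) := Fin d → ZMod 2

/-- The hypercube graph `Q^d` on vertex set `{0,1}^d`. -/
def cubeGraph (d : ℕ) : SimpleGraph (Vtx d) where
  Adj u v := hammingDist u v = 1
  symm := by
    constructor
    intro u v h
    rwa [hammingDist_comm]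
  loopless := by
    constructor
    intro u h
    simp [hammingDist_self] at h

/-- The graph `Q^d(k)`: vertices at Hamming distance exactly `k` are adjacent. -/
def distGraph (d k : ℕ) : SimpleGraph (Vtx d) where
  Adj u v := u ≠ v ∧ hammingDist u v = k
  symm := by
    constructor
    intro u v h
    exact ⟨h.1.symm, by rw [hammingDist_comm]; exact h.2⟩
  loopless := by
    constructor
    intro u h
    exact h.1 rfl

/-- Embedding of `{0,1}^d` into `ℝ^d`. -/
def toR {d : ℕ} (v : Vtx d) : Fin d → ℝ := fun i => ((v i).val : ℝ)

/-- The set of retained vertices of a percolation configuration. -/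
def retained {d : ℕ} (ω : Vtx d → Bool) : Set (Vtx d) := {v | ω v = true}

/-- `u v` is an edge of the polytope `conv S`. -/
def IsPolytopeEdge {d : ℕ} (S : Set (Vtx d)) (u v : Vtx d) : Prop :=
  u ∈ S ∧ v ∈ S ∧ u ≠ v ∧ ∃ (f : (Fin d → ℝ) →ₗ[ℝ] ℝ) (c : ℝ),
    f (toR u) = c ∧ f (toR v) = c ∧ ∀ z ∈ S, z ≠ u → z ≠ v → c < f (toR z)

/-- The graph of the polytope `conv S`. -/
def polytopeGraph {d : ℕ} (S : Set (Vtx d)) : SimpleGraph (Vtx d) where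
  Adj u v := IsPolytopeEdge S u v
  symm := by
    constructor
    rintro u v ⟨hu, hv, hne, f, c, h1, h2, h3⟩
    exact ⟨hv, hu, hne.symm, f, c, h2, h1, fun z hz z1 z2 => h3 z hz z2 z1⟩
  loopless := by
    constructor
    rintro u ⟨-, -, hne, -⟩
    exact hne rfl

/-- Degree of a vertex in a graph. -/
def deg {V : Type*} (G : SimpleGraph V) (v : V) : ℕ := {u | G.Adj v u}.ncard

/-- External neighbourhood of a set in a graph. -/
def extNbhd {V : Type*} (G : SimpleGraph V) (S : Set V) : Set V :=
  {v | v ∉ S ∧ ∃ u ∈ S, G.Adj u v}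

/-- Number of edges with exactly one endpoint in `S`. -/
def edgeBoundary {V : Type*} (G : SimpleGraph V) (S : Set V) : ℕ :=
  {p : V × V | p.1 ∈ S ∧ p.2 ∉ S ∧ G.Adj p.1 p.2}.ncard

/-- Bernoulli measure on `Bool`. -/
def bern (p : ℝ) : Measure Bool :=
  ENNReal.ofReal p • Measure.dirac true + ENNReal.ofReal (1 - p) • Measure.dirac false

instance bern_finite (p : ℝ) : IsFiniteMeasure (bern p) := by
  constructor
  simp only [bern, Measure.coe_add, Pi.add_apply, Measure.smul_apply, smul_eq_mul]
  exact ENNReal.add_lt_top.2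
    ⟨ENNReal.mul_lt_top ENNReal.ofReal_lt_top (measure_lt_top _ _),
     ENNReal.mul_lt_top ENNReal.ofReal_lt_top (measure_lt_top _ _)⟩

/-- Product Bernoulli measure: each vertex of `{0,1}^d` retained independently w.p. `p`. -/
def vertexMeasure (d : ℕ) (p : ℝ) : Measure (Vtx d → Bool) :=
  Measure.pi fun _ => bern p

/-- Product Bernoulli measure on edge configurations. -/
def edgeMeasure (d : ℕ) (q : ℝ) : Measure (Sym2 (Vtx d) → Bool) :=
  Measure.pi fun _ => bern q

/-- Joint law of independent vertex- and edge-percolation configurations. -/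
def mixedMeasure (d : ℕ) (p q : ℝ) :
    Measure ((Vtx d → Bool) × (Sym2 (Vtx d) → Bool)) :=
  (vertexMeasure d p).prod (edgeMeasure d q)

/-- The induced subgraph `Q^d_p` of the hypercube given a vertex configuration. -/
def inducedGraph (d : ℕ) (f : Vtx d → Bool) : SimpleGraph (Vtx d) where
  Adj u v := (cubeGraph d).Adj u v ∧ f u = true ∧ f v = true
  symm := by
    constructor
    rintro u v ⟨h, hu, hv⟩
    exact ⟨(cubeGraph d).adj_symm h, hv, hu⟩
  loopless := ⟨fun u h => (cubeGraph d).irrefl h.1⟩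

/-- The mixed percolation `Q^d_{p,q}` given vertex and edge configurations. -/
def mixedGraph (d : ℕ) (f : Vtx d → Bool) (g : Sym2 (Vtx d) → Bool) :
    SimpleGraph (Vtx d) where
  Adj u v := (cubeGraph d).Adj u v ∧ f u = true ∧ f v = true ∧ g s(u, v) = true
  symm := by
    constructor
    rintro u v ⟨h, hu, hv, he⟩
    refine ⟨(cubeGraph d).adj_symm h, hv, hu, ?_⟩
    rwa [Sym2.eq_swap]
  loopless := ⟨fun u h => (cubeGraph d).irrefl h.1⟩

/-- The subgraph of `Q^d` with vertex set `U` and edges of `F` inside `U`. -/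
def setGraph (d : ℕ) (U : Set (Vtx d)) (F : Set (Sym2 (Vtx d))) :
    SimpleGraph (Vtx d) where
  Adj u v := (cubeGraph d).Adj u v ∧ u ∈ U ∧ v ∈ U ∧ s(u, v) ∈ F
  symm := by
    constructor
    rintro u v ⟨h, hu, hv, he⟩
    refine ⟨(cubeGraph d).adj_symm h, hv, hu, ?_⟩
    rwa [Sym2.eq_swap]
  loopless := ⟨fun u h => (cubeGraph d).irrefl h.1⟩

/-- Indicator vector `1_e ∈ F_2^d` of a set of coordinates. -/
def indic {d : ℕ} (e : Finset (Fin d)) : Vtx d := fun i => if i ∈ e then 1 else 0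

/-- The family `D_{k,m}` of sets of `m` pairwise disjoint `k`-subsets of `[d]`. -/
def Dfam (d k m : ℕ) : Set (Finset (Finset (Fin d))) :=
  {D | D.card = m ∧ (∀ e ∈ D, e.card = k) ∧
    ∀ e ∈ D, ∀ f ∈ D, e ≠ f → Disjoint e f}

/-- Vertex set of the cube `Q(D,v)`. -/
def QV {d : ℕ} (D : Finset (Finset (Fin d))) (v : Vtx d) : Set (Vtx d) :=
  {u | ∃ I : Finset (Finset (Fin d)), I ⊆ D ∧ u = v + ∑ e ∈ I, indic e}

/-- Adjacency in the cube `Q(D,v)`. -/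
def QAdj {d : ℕ} (D : Finset (Finset (Fin d))) (v : Vtx d) (u w : Vtx d) : Prop :=
  u ∈ QV D v ∧ w ∈ QV D v ∧ ∃ e ∈ D, u + w = indic e

/-- The cube `Q(D,v)` as a simple graph on the ambient vertex set. -/
def Qgraph {d : ℕ} (D : Finset (Finset (Fin d))) (v₀ : Vtx d) : SimpleGraph (Vtx d) where
  Adj u w := u ≠ w ∧ QAdj D v₀ u w
  symm := by
    constructor
    rintro u w ⟨hne, h1, h2, e, he, hs⟩
    exact ⟨hne.symm, h2, h1, e, he, by rwa [add_comm]⟩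
  loopless := ⟨fun u h => h.1 rfl⟩

/-- Edge set of the cube `Q(D,v)` as a set of unordered pairs. -/
def Qedges {d : ℕ} (D : Finset (Finset (Fin d))) (v : Vtx d) : Set (Sym2 (Vtx d)) :=
  {e | ∃ u w : Vtx d, e = s(u, w) ∧ u ≠ w ∧ QAdj D v u w}

/-- The family `Q_{k,m}` of cubes `Q(D,v)`, represented as (vertex set, edge set) pairs. -/
def CubeFam (d k m : ℕ) : Set (Set (Vtx d) × Set (Sym2 (Vtx d))) :=
  {H | ∃ D ∈ Dfam d k m, ∃ v : Vtx d, H.1 = QV D v ∧ H.2 = Qedges D v}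

/-- The auxiliary graph `G_□` on `Q_{k,m}`. -/
def Gsquare (d k m : ℕ) : SimpleGraph (CubeFam d k m) where
  Adj H H' := H ≠ H' ∧ (H.1.1 ∩ H'.1.1).ncard = 2 ^ (m - 1)
  symm := by
    constructor
    rintro H H' ⟨hne, h⟩
    exact ⟨hne.symm, by rwa [Set.inter_comm]⟩
  loopless := ⟨fun H h => h.1 rfl⟩

/-- The natural embedding of `Q^m` onto the cube `Q(D,v₀)` with directions `E 0, …, E (m-1)`. -/
def cubeEmb {d : ℕ} (m : ℕ) (E : Fin m → Finset (Fin d)) (v₀ : Vtx d) (y : Vtx m) : Vtx d :=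
  v₀ + ∑ i, y i • indic (E i)

instance setPairMS (X Y : Type*) : MeasurableSpace (Set X × Set Y) := ⊤

/-- The (vertex set, edge set) pair of the graph `H_p[P_k]` transported to `Q^m`. -/
def polyMap {d : ℕ} (m k : ℕ) (E : Fin m → Finset (Fin d)) (v₀ : Vtx d)
    (ω : Vtx d → Bool) : Set (Vtx m) × Set (Sym2 (Vtx m)) :=
  ({y | ω (cubeEmb m E v₀ y) = true},
   {e | ∃ y z : Vtx m, e = s(y, z) ∧ (cubeGraph m).Adj y z ∧
      IsPolytopeEdge (retained ω) (cubeEmb m E v₀ y) (cubeEmb m E v₀ z) ∧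
      hammingDist (cubeEmb m E v₀ y) (cubeEmb m E v₀ z) = k})

/-- The (vertex set, edge set) pair of the mixed percolation `Q^m_{p,q}`. -/
def mixMap (m : ℕ) (ω : (Vtx m → Bool) × (Sym2 (Vtx m) → Bool)) :
    Set (Vtx m) × Set (Sym2 (Vtx m)) :=
  ({y | ω.1 y = true}, (mixedGraph m ω.1 ω.2).edgeSet)

/-- The smallest subcube `Q^d[x,y]` of `Q^d` containing `x` and `y`. -/
def subcube {d : ℕ} (x y : Vtx d) : Set (Vtx d) := {z | ∀ i, x i = y i → z i = x i}

/-- `U` has the `α`-star property: pairwise vertex-disjoint stars centred at the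
elements of `U`, each with at least `(1 - α/2)d` leaves. -/
def HasStarProperty {d : ℕ} (α : ℝ) (U : Set (Vtx d)) : Prop :=
  ∃ L : Vtx d → Set (Vtx d),
    (∀ u ∈ U, (∀ w ∈ L u, (cubeGraph d).Adj u w) ∧ ((1 - α / 2) * d ≤ ((L u).ncard : ℝ))) ∧
    (∀ u ∈ U, ∀ u' ∈ U, u ≠ u' → Disjoint (insert u (L u)) (insert u' (L u')))

end


section AuxFHDV
open ENNReal NNReal

instance myMSC (d : ℕ) : MeasurableSingletonClass (Vtx d → Bool) := by
  constructor
  intro f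
  have : {f} = Set.pi Set.univ (fun i => {f i}) := by
    ext g; simp [Set.eq_singleton_iff_unique_mem, funext_iff, eq_comm]
  rw [this]
  exact MeasurableSet.univ_pi (fun i => (by trivial))

lemma measurableSet_all {d : ℕ} (s : Set (Vtx d → Bool)) : MeasurableSet s :=
  s.to_countable.measurableSet

lemma bern_true {p : ℝ} : bern p {true} = ENNReal.ofReal p := by
  simp [bern, Measure.dirac_apply]

lemma bern_univ {p : ℝ} (h0 : 0 ≤ p) (h1 : p ≤ 1) : bern p Set.univ = 1 := by
  simp [bern]
  rw [← ENNReal.ofReal_add h0 (by linarith)]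
  norm_num

lemma cyl_measure {d : ℕ} {p : ℝ} (h0 : 0 ≤ p) (h1 : p ≤ 1) (S : Finset (Vtx d)) :
    vertexMeasure d p {ω | ∀ u ∈ S, ω u = true} = (ENNReal.ofReal p) ^ S.card := by
  have hset : {ω : Vtx d → Bool | ∀ u ∈ S, ω u = true}
      = Set.pi Set.univ (fun u => if u ∈ S then {true} else Set.univ) := by
    ext ω
    simp only [Set.mem_setOf_eq, Set.mem_pi, Set.mem_univ, forall_true_left]
    constructor
    · intro h u; by_cases hu : u ∈ S <;> simp [hu, h u]
    · intro h u hu; have := h u; simp [hu] at this; exact this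
  rw [vertexMeasure, hset, Measure.pi_pi]
  have : ∀ u : Vtx d, bern p (if u ∈ S then {true} else Set.univ)
      = if u ∈ S then ENNReal.ofReal p else 1 := by
    intro u
    by_cases hu : u ∈ S
    · rw [if_pos hu, if_pos hu, bern_true]
    · rw [if_neg hu, if_neg hu]; exact bern_univ h0 h1
  simp only [this]
  rw [← Finset.prod_filter, Finset.prod_const]
  congr 1
  rw [Finset.filter_mem_eq_inter, Finset.univ_inter]

def Nv (d : ℕ) (v : Vtx d) : Finset (Vtx d) :=
  Finset.univ.filter (fun u => hammingDist v u = 1)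

lemma zmod2_eq (a b c : ZMod 2) (h1 : a ≠ c) (h2 : b ≠ c) : a = b := by
  revert a b c; decide

lemma card_Nv_le (d : ℕ) (v : Vtx d) : (Nv d v).card ≤ d := by
  rcases Nat.eq_zero_or_pos d with hd | hd
  · subst hd
    have : Nv 0 v = ∅ := by
      ext u
      simp [Nv, hammingDist]
    simp [this]
  haveI : Nonempty (Fin d) := ⟨⟨0, hd⟩⟩
  have key : ∀ u : Vtx d, ∃ i : Fin d, u ∈ Nv d v →
      (Finset.univ.filter (fun j => v j ≠ u j)) = {i} := by
    intro u
    by_cases hu : u ∈ Nv d v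
    · simp only [Nv, Finset.mem_filter] at hu
      obtain ⟨i, hi⟩ := Finset.card_eq_one.1 hu.2
      exact ⟨i, fun _ => hi⟩
    · exact ⟨Classical.arbitrary _, fun h => absurd h hu⟩
  choose f hf using key
  have : (Nv d v).card ≤ (Finset.univ : Finset (Fin d)).card := by
    apply Finset.card_le_card_of_injOn f (fun _ _ => Finset.mem_univ _)
    intro u hu u' hu' hff
    rw [Finset.mem_coe] at hu hu'
    have h1 := hf u hu
    have h2 := hf u' hu'
    funext j
    by_cases hj : j = f u
    · subst hj
      have m1 : f u ∈ ({f u} : Finset (Fin d)) := Finset.mem_singleton_self _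
      rw [← h1, Finset.mem_filter] at m1
      have m2 : f u ∈ ({f u'} : Finset (Fin d)) := by rw [hff]; exact Finset.mem_singleton_self _
      rw [← h2, Finset.mem_filter] at m2
      exact zmod2_eq _ _ _ (fun h => m1.2 h.symm) (fun h => m2.2 h.symm)
    · have n1 : j ∉ (Finset.univ.filter (fun j => v j ≠ u j)) := by
        rw [h1]; simpa using hj
      have n2 : j ∉ (Finset.univ.filter (fun j => v j ≠ u' j)) := by
        rw [h2, Finset.mem_singleton, ← hff]; exact hj
      simp only [Finset.mem_filter, Finset.mem_univ, true_and, not_not] at n1 n2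
      rw [← n1, ← n2]
  simpa using this

lemma deg_subset (d : ℕ) (ω : Vtx d → Bool) (v : Vtx d) (k : ℕ)
    (h : k ≤ deg (inducedGraph d ω) v) :
    ∃ S ∈ Finset.powersetCard k (Nv d v), ∀ u ∈ S, ω u = true := by
  classical
  have hfin : {u | (inducedGraph d ω).Adj v u}.Finite := Set.toFinite _
  have hcard : k ≤ hfin.toFinset.card := by
    rwa [← Set.ncard_eq_toFinset_card _ hfin]
  obtain ⟨S, hS, hSc⟩ := Finset.exists_subset_card_eq hcard
  refine ⟨S, Finset.mem_powersetCard.2 ⟨?_, hSc⟩, ?_⟩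
  · intro u hu
    have := hS hu
    rw [Set.Finite.mem_toFinset] at this
    simp only [Nv, Finset.mem_filter, Finset.mem_univ, true_and]
    exact (show (inducedGraph d ω).Adj v u from this).1
  · intro u hu
    have := hS hu
    rw [Set.Finite.mem_toFinset] at this
    exact (show (inducedGraph d ω).Adj v u from this).2.2

lemma vm_prob (d : ℕ) {p : ℝ} (h0 : 0 ≤ p) (h1 : p ≤ 1) :
    IsProbabilityMeasure (vertexMeasure d p) := by
  constructor
  rw [vertexMeasure, Measure.pi_univ]
  rw [Finset.prod_const, bern_univ h0 h1, one_pow]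

-- Markov / union-bound lemma
lemma markov_count (d : ℕ) (p : ℝ) (P : Vtx d → (Vtx d → Bool) → Prop) (t : ℝ) :
    vertexMeasure d p {ω | t < ({v | P v ω}.ncard : ℝ)} * ENNReal.ofReal t ≤
      ∑ v : Vtx d, vertexMeasure d p {ω | P v ω} := by
  classical
  set μ := vertexMeasure d p
  set f : (Vtx d → Bool) → ℝ≥0∞ := fun ω => ENNReal.ofNNReal ({v | P v ω}.ncard : NNReal) with hfdef
  have hf : Measurable f := fun s _ => measurableSet_all _
  have step1 : ∀ ω, f ω = ∑ v : Vtx d, ({ω' | P v ω'}.indicator (fun _ => (1:ℝ≥0∞)) ω) := by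
    intro ω
    have : {v | P v ω}.ncard = (Finset.univ.filter (fun v => P v ω)).card := by
      rw [Set.ncard_eq_toFinset_card']
      congr 1
      ext v; simp
    rw [hfdef]
    simp only [this, Finset.card_filter]
    push_cast
    refine Finset.sum_congr rfl (fun v _ => ?_)
    by_cases h : P v ω <;> simp [Set.indicator_apply, h]
  have step2 : ∫⁻ ω, f ω ∂μ = ∑ v : Vtx d, μ {ω | P v ω} := by
    calc ∫⁻ ω, f ω ∂μ
        = ∫⁻ ω, ∑ v : Vtx d, ({ω' | P v ω'}.indicator (fun _ => (1:ℝ≥0∞)) ω) ∂μ := by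
          congr 1; funext ω; exact step1 ω
      _ = ∑ v : Vtx d, ∫⁻ ω, ({ω' | P v ω'}.indicator (fun _ => (1:ℝ≥0∞)) ω) ∂μ :=
          lintegral_finset_sum _ (fun v _ => fun s _ => measurableSet_all _)
      _ = ∑ v : Vtx d, μ {ω | P v ω} := by
          refine Finset.sum_congr rfl (fun v _ => ?_)
          rw [lintegral_indicator_const (measurableSet_all _), one_mul]
  have step3 := mul_meas_ge_le_lintegral₀ (μ := μ) hf.aemeasurable (ENNReal.ofReal t)
  rw [step2] at step3
  refine le_trans ?_ step3
  rw [mul_comm]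
  apply mul_le_mul_right
  apply measure_mono
  intro ω hω
  simp only [Set.mem_setOf_eq] at hω ⊢
  calc ENNReal.ofReal t ≤ ENNReal.ofReal ({v | P v ω}.ncard : ℝ) :=
        ENNReal.ofReal_le_ofReal hω.le
    _ = f ω := by rw [hfdef]; simp [ENNReal.ofReal_natCast]

-- single binomial term bound
lemma choose_term_le (d k : ℕ) (hk : k ≤ d) (x : ℝ) (hx : 0 ≤ x) :
    (d.choose k : ℝ) * x ^ k ≤ (1 + x) ^ d := by
  have h := add_pow x 1 d
  rw [add_comm] at h
  rw [h]
  have : (d.choose k : ℝ) * x ^ k = x ^ k * 1 ^ (d - k) * (d.choose k : ℝ) := by ring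
  rw [this]
  apply Finset.single_le_sum (f := fun m => x ^ m * 1 ^ (d - m) * (d.choose m : ℝ))
  · intro i _
    positivity
  · exact Finset.mem_range.2 (Nat.lt_succ_of_le hk)

lemma numeric1 (ε α p : ℝ) (d : ℕ) (hε : 0 < ε) (hε' : ε < 1/2)
    (hα : 0 < α) (hα1 : α < 1) (hp0 : 0 ≤ p) (hp1 : p ≤ 1 - ε) :
    (2:ℝ) ^ d * (d.choose ⌈(1-α)*d⌉₊ : ℝ) * p ^ (⌈(1-α)*d⌉₊) ≤
      ((2 - ε) * (2/ε) ^ (α:ℝ)) ^ d := by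
  set l : ℝ := 2/ε with hl
  have hl1 : 1 < l := by
    rw [hl]; rw [lt_div_iff₀ hε]; linarith
  have hl0 : 0 < l := lt_trans one_pos hl1
  set k : ℕ := ⌈(1-α)*d⌉₊ with hk
  have hkd : k ≤ d := by
    rw [hk]
    apply Nat.ceil_le.2
    have : (1-α) * d ≤ 1 * d := by
      apply mul_le_mul_of_nonneg_right (by linarith) (Nat.cast_nonneg d)
    simpa using this
  have hkge : (1-α) * d ≤ (k : ℝ) := Nat.le_ceil _
  -- key equality
  have key : ((2 - ε) * l ^ (α:ℝ)) ^ d * l ^ ((1-α)*d) = (2:ℝ)^d * ((2-ε)/ε)^d := by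
    rw [mul_pow, ← Real.rpow_natCast (l ^ (α:ℝ)) d, ← Real.rpow_mul hl0.le,
      mul_assoc, ← Real.rpow_add hl0]
    have : α * d + (1-α)*d = (d:ℕ) := by push_cast; ring
    rw [this, Real.rpow_natCast, ← mul_pow, ← mul_pow]
    congr 1
    rw [hl]
    field_simp
  -- main chain after multiplying by l^((1-α)d)
  have hT : (0:ℝ) < l ^ ((1-α)*d) := Real.rpow_pos_of_pos hl0 _
  rw [← mul_le_mul_iff_of_pos_right hT, key]
  calc (2:ℝ)^d * (d.choose k : ℝ) * p ^ k * l ^ ((1-α)*d)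
      ≤ (2:ℝ)^d * (d.choose k : ℝ) * p ^ k * l ^ (k:ℝ) := by
        apply mul_le_mul_of_nonneg_left (Real.rpow_le_rpow_of_exponent_le hl1.le hkge)
        positivity
    _ = (2:ℝ)^d * ((d.choose k : ℝ) * (p*l) ^ k) := by
        rw [Real.rpow_natCast, mul_pow]; ring
    _ ≤ (2:ℝ)^d * (1 + p*l) ^ d := by
        apply mul_le_mul_of_nonneg_left (choose_term_le d k hkd _ (by positivity))
        positivity
    _ ≤ (2:ℝ)^d * ((2-ε)/ε) ^ d := by
        apply mul_le_mul_of_nonneg_left _ (by positivity)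
        apply pow_le_pow_left₀ (by positivity)
        rw [hl]
        rw [div_eq_mul_inv, ← mul_assoc, le_div_iff₀ hε]
        calc (1 + p * 2 * ε⁻¹) * ε = ε + p * 2 * (ε⁻¹ * ε) := by ring
          _ = ε + p * 2 := by rw [inv_mul_cancel₀ hε.ne', mul_one]
          _ ≤ 2 - ε := by linarith

lemma exists_alpha (ε : ℝ) (hε : 0 < ε) (hε' : ε < 1/2) :
    ∃ α : ℝ, 0 < α ∧ α < 1 ∧ (2-ε) * (2/ε) ^ (α:ℝ) < (2:ℝ) ^ ((1:ℝ) - α^3) := by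
  have hl0 : (0:ℝ) < 2/ε := by positivity
  set F : ℝ → ℝ := fun a => (2-ε) * (2/ε)^(a:ℝ) - (2:ℝ)^((1:ℝ) - a^3) with hF
  have hc1 : ContinuousAt (fun a : ℝ => (2/ε)^(a:ℝ)) 0 :=
    Real.continuousAt_const_rpow hl0.ne'
  have hc2 : ContinuousAt (fun a : ℝ => (2:ℝ)^((1:ℝ) - a^3)) 0 := by
    apply ContinuousAt.comp (Real.continuousAt_const_rpow two_ne_zero)
    fun_prop
  have hcont : ContinuousAt F 0 := (continuousAt_const.mul hc1).sub hc2
  have hF0 : F 0 = -ε := by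
    simp only [hF, Real.rpow_zero, mul_one, pow_three, mul_zero, zero_mul, sub_zero, Real.rpow_one]
    ring
  have hev : ∀ᶠ a in nhds (0:ℝ), F a < 0 := by
    have := hcont.tendsto
    rw [hF0] at this
    exact this.eventually_lt_const (by linarith)
  have hev2 : ∀ᶠ a in nhds (0:ℝ), a < 1 := eventually_lt_nhds one_pos
  have hev3 : ∀ᶠ a in nhdsWithin (0:ℝ) (Set.Ioi 0), F a < 0 ∧ a < 1 :=
    ((hev.and hev2).filter_mono nhdsWithin_le_nhds)
  have hev4 : ∀ᶠ a in nhdsWithin (0:ℝ) (Set.Ioi 0), 0 < a ∧ F a < 0 ∧ a < 1 := by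
    filter_upwards [hev3, self_mem_nhdsWithin] with a h1 h2
    exact ⟨h2, h1⟩
  obtain ⟨α, hα0, hαF, hα1⟩ := hev4.exists
  exact ⟨α, hα0, hα1, by rw [hF] at hαF; linarith⟩

end AuxFHDV

open ENNReal NNReal in
/-- **Lemma (degrees, first item).** For every `ε ∈ (0,1/2)` there is `α > 0` such that
whenever `1/2 - ε ≤ p(d) ≤ 1 - ε`, whp the number of vertices of `Q^d_{p(d)}` of degree
at least `(1-α)d` is at most `2^{(1-α³)d}`. -/
theorem few_high_degree_vertices (ε : ℝ) (hε : 0 < ε) (hε' : ε < 1 / 2) :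
    ∃ α : ℝ, 0 < α ∧ ∀ p : ℕ → ℝ,
      (∀ d : ℕ, 1 / 2 - ε ≤ p d ∧ p d ≤ 1 - ε) →
      Filter.Tendsto
        (fun d : ℕ =>
          vertexMeasure d (p d)
            {ω | (({v | ω v = true ∧ (1 - α) * d ≤ (deg (inducedGraph d ω) v : ℝ)}.ncard : ℝ)
              ≤ (2 : ℝ) ^ ((1 - α ^ 3) * d))})
        Filter.atTop (nhds 1) := by
  classical
  obtain ⟨α, hα0, hα1, hαlt⟩ := exists_alpha ε hε hε'
  refine ⟨α, hα0, ?_⟩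
  intro p hp
  set l : ℝ := 2/ε with hl
  set N : ℝ := (2-ε) * l^(α:ℝ) with hN
  set T : ℝ := (2:ℝ)^((1:ℝ)-α^3) with hT
  have hTpos : (0:ℝ) < T := Real.rpow_pos_of_pos two_pos _
  have hNpos : (0:ℝ) < N := by
    have : (0:ℝ) < l^(α:ℝ) := Real.rpow_pos_of_pos (by positivity) _
    have h2ε : (0:ℝ) < 2-ε := by linarith
    positivity
  set ρ : ℝ := N / T with hρ
  have hρ0 : 0 ≤ ρ := by positivity
  have hρ1 : ρ < 1 := (div_lt_one hTpos).2 hαlt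
  -- per-d bound on the complement
  have key : ∀ d : ℕ,
      vertexMeasure d (p d)
        {ω | (2:ℝ) ^ ((1 - α ^ 3) * d) <
          (({v | ω v = true ∧ (1 - α) * d ≤ (deg (inducedGraph d ω) v : ℝ)}.ncard : ℝ))}
        ≤ ENNReal.ofReal (ρ ^ d) := by
    intro d
    obtain ⟨hpl, hpu⟩ := hp d
    have hp0 : 0 ≤ p d := by linarith
    have hp1 : p d ≤ 1 := by linarith
    set k : ℕ := ⌈(1-α)*d⌉₊ with hk
    set t : ℝ := (2:ℝ) ^ ((1 - α ^ 3) * (d:ℝ)) with ht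
    have htpos : (0:ℝ) < t := Real.rpow_pos_of_pos two_pos _
    set P : Vtx d → (Vtx d → Bool) → Prop :=
      fun v ω => ω v = true ∧ (1 - α) * d ≤ (deg (inducedGraph d ω) v : ℝ) with hP
    -- Markov
    have hmar := markov_count d (p d) P t
    -- bound each vertex event
    have hbound : ∀ v : Vtx d, vertexMeasure d (p d) {ω | P v ω}
        ≤ ENNReal.ofReal ((d.choose k : ℝ) * (p d)^k) := by
      intro v
      have hsub : {ω | P v ω} ⊆
          ⋃ S ∈ Finset.powersetCard k (Nv d v), {ω : Vtx d → Bool | ∀ u ∈ S, ω u = true} := by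
        intro ω hω
        have hdeg : k ≤ deg (inducedGraph d ω) v := Nat.ceil_le.2 hω.2
        obtain ⟨S, hS, hSall⟩ := deg_subset d ω v k hdeg
        exact Set.mem_biUnion hS hSall
      calc vertexMeasure d (p d) {ω | P v ω}
          ≤ vertexMeasure d (p d)
            (⋃ S ∈ Finset.powersetCard k (Nv d v), {ω : Vtx d → Bool | ∀ u ∈ S, ω u = true}) :=
            measure_mono hsub
        _ ≤ ∑ S ∈ Finset.powersetCard k (Nv d v),
              vertexMeasure d (p d) {ω : Vtx d → Bool | ∀ u ∈ S, ω u = true} :=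
            measure_biUnion_finset_le _ _
        _ = ∑ S ∈ Finset.powersetCard k (Nv d v), (ENNReal.ofReal (p d)) ^ k := by
            refine Finset.sum_congr rfl (fun S hS => ?_)
            rw [cyl_measure hp0 hp1 S, (Finset.mem_powersetCard.1 hS).2]
        _ = ((Nv d v).card.choose k : ℝ≥0∞) * (ENNReal.ofReal (p d)) ^ k := by
            rw [Finset.sum_const, Finset.card_powersetCard, nsmul_eq_mul]
        _ ≤ (d.choose k : ℝ≥0∞) * (ENNReal.ofReal (p d)) ^ k := by
            apply mul_le_mul_left
            exact_mod_cast Nat.cast_le.2 (Nat.choose_le_choose k (card_Nv_le d v))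
        _ = ENNReal.ofReal ((d.choose k : ℝ) * (p d)^k) := by
            rw [ENNReal.ofReal_mul (by positivity), ← ENNReal.ofReal_pow hp0,
              ENNReal.ofReal_natCast]
    -- total
    have htotal : (∑ v : Vtx d, vertexMeasure d (p d) {ω | P v ω})
        ≤ ENNReal.ofReal (N ^ d) := by
      calc (∑ v : Vtx d, vertexMeasure d (p d) {ω | P v ω})
          ≤ ∑ _v : Vtx d, ENNReal.ofReal ((d.choose k : ℝ) * (p d)^k) :=
            Finset.sum_le_sum (fun v _ => hbound v)
        _ = (Fintype.card (Vtx d) : ℝ≥0∞) * ENNReal.ofReal ((d.choose k : ℝ) * (p d)^k) := by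
            rw [Finset.sum_const, nsmul_eq_mul]; rfl
        _ = ENNReal.ofReal ((2:ℝ)^d * ((d.choose k : ℝ) * (p d)^k)) := by
            have hcard : Fintype.card (Vtx d) = 2^d := by
              rw [Fintype.card_fun]; simp [ZMod]
            rw [hcard, ENNReal.ofReal_mul (by positivity : (0:ℝ) ≤ (2:ℝ)^d)]
            congr 1
            rw [← ENNReal.ofReal_natCast (2^d)]
            congr 1
            push_cast
            ring
        _ ≤ ENNReal.ofReal (N ^ d) := by
            apply ENNReal.ofReal_le_ofReal
            have := numeric1 ε α (p d) d hε hε' hα0 hα1 hp0 hpu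
            rw [hN]
            calc (2:ℝ)^d * ((d.choose k : ℝ) * (p d)^k)
                = (2:ℝ)^d * (d.choose k : ℝ) * (p d)^k := by ring
              _ ≤ ((2-ε) * (2/ε)^(α:ℝ))^d := this
    -- combine Markov
    have hmu : vertexMeasure d (p d) {ω | t < (({v | P v ω}.ncard : ℝ))}
        ≤ ENNReal.ofReal (N ^ d) / ENNReal.ofReal t := by
      rw [ENNReal.le_div_iff_mul_le (Or.inl (by simp [ENNReal.ofReal_pos, htpos]))
        (Or.inl ENNReal.ofReal_ne_top)]
      exact le_trans hmar htotal
    have hdiv : ENNReal.ofReal (N ^ d) / ENNReal.ofReal t = ENNReal.ofReal (ρ ^ d) := by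
      rw [← ENNReal.ofReal_div_of_pos htpos]
      congr 1
      have ht' : t = T ^ d := by
        rw [ht, hT, ← Real.rpow_natCast ((2:ℝ)^((1:ℝ)-α^3)) d, ← Real.rpow_mul (by norm_num)]
      rw [ht', hρ, div_pow]
    exact le_trans (le_of_eq (by rfl)) (hmu.trans (le_of_eq hdiv))
  -- tendsto of the complement measures
  have hBtend : Filter.Tendsto
      (fun d : ℕ => vertexMeasure d (p d)
        {ω | (2:ℝ) ^ ((1 - α ^ 3) * d) <
          (({v | ω v = true ∧ (1 - α) * d ≤ (deg (inducedGraph d ω) v : ℝ)}.ncard : ℝ))})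
      Filter.atTop (nhds 0) := by
    apply tendsto_of_tendsto_of_tendsto_of_le_of_le (g := fun _ => (0:ENNReal))
      (h := fun d => ENNReal.ofReal (ρ ^ d)) tendsto_const_nhds
    · have := ENNReal.tendsto_ofReal
        (tendsto_pow_atTop_nhds_zero_of_lt_one hρ0 hρ1)
      simpa using this
    · exact fun d => zero_le
    · exact key
  -- convert to the main event
  have heq : ∀ d : ℕ,
      vertexMeasure d (p d)
        {ω | (({v | ω v = true ∧ (1 - α) * d ≤ (deg (inducedGraph d ω) v : ℝ)}.ncard : ℝ)
          ≤ (2 : ℝ) ^ ((1 - α ^ 3) * d))}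
        = 1 - vertexMeasure d (p d)
          {ω | (2:ℝ) ^ ((1 - α ^ 3) * d) <
            (({v | ω v = true ∧ (1 - α) * d ≤ (deg (inducedGraph d ω) v : ℝ)}.ncard : ℝ))} := by
    intro d
    obtain ⟨hpl, hpu⟩ := hp d
    haveI := vm_prob d (by linarith : (0:ℝ) ≤ p d) (by linarith : p d ≤ 1)
    rw [← prob_compl_eq_one_sub (measurableSet_all _)]
    congr 1
    ext ω
    simp only [Set.mem_compl_iff, Set.mem_setOf_eq, not_lt]
  have hfinal := ENNReal.Tendsto.sub (tendsto_const_nhds (x := (1:ENNReal)))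
    hBtend (Or.inl ENNReal.one_ne_top)
  rw [tsub_zero] at hfinal
  exact Filter.Tendsto.congr (fun d => (heq d).symm) hfinal
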